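/- Let K be a finite field with char(K) = 2, L a field extension of K of finite degree k ≥ 1, and S = {restrictScalars_K(l) : l a 1-dimensional L-subspace of L²} the planar spread of the 2k-dimensional K-space L². Let M ∈ GL(2, L) have irreducible characteristic polynomial over L and multiplicative order |L|² − 1, and set H̄ = ⟨M^{|L|−1}⟩, acting K-linearly on L². Let F = (F_1, …, F_{2k−1}) be a full flag of K-subspaces of L² with F_k ∈ S. Then the orbit flag code Orb_{H̄}(F) = {F·A : A ∈ H̄} has cardinality |L| + 1 (the largest possible size), and any two distinct flags in Orb_{H̄}(F) have flag distance exactly 2k² (the maximum possible); in particular Orb_{H̄}(F) is an optimum distance full flag code with the largest possible size. -/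
import Mathlib


open Module

/-- The planar spread of the `K`-vector space `L²` obtained by field reduction: the set of
`K`-subspaces arising as `restrictScalars K` of the `L`-lines of `L²`. -/
def fieldReductionSpread (K L : Type*) [Field K] [Field L] [Algebra K L] :
    Set (Submodule K (Fin 2 → L)) :=
  {U | ∃ l : Submodule L (Fin 2 → L), finrank L l = 1 ∧ U = l.restrictScalars K}

/-- The `K`-linear action of `A ∈ GL(2, L)` on `K`-subspaces of `L²`: `U · A` is the image
of `U` under the (in particular `K`-linear) map given by the matrix `A`. -/
noncomputable def mapGLK (K : Type*) {L : Type*} [Field K] [Field L] [Algebra K L]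
    (A : GL (Fin 2) L) (U : Submodule K (Fin 2 → L)) : Submodule K (Fin 2 → L) :=
  U.map (LinearMap.restrictScalars K (Matrix.toLin' (A : Matrix (Fin 2) (Fin 2) L)))

/-- The subspace distance `d_S(U, W) = dim U + dim W − 2 dim(U ∩ W)`. -/
noncomputable def subspaceDist {F V : Type*} [Field F] [AddCommGroup V] [Module F V]
    (U W : Submodule F V) : ℕ :=
  finrank F U + finrank F W - 2 * finrank F ↥(U ⊓ W)

/-- The orbit flag code of a full flag `Fl` of `K`-subspaces of `L²` (indexed so that `Fl i`
has `K`-dimension `i` for `1 ≤ i ≤ 2k−1`) under a subgroup `H ≤ GL(2, L)` acting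
`K`-linearly, recorded as a set of `(2k−1)`-tuples of `K`-subspaces. -/
noncomputable def orbFlagKL {K L : Type*} [Field K] [Field L] [Algebra K L]
    (H : Subgroup (GL (Fin 2) L)) (k : ℕ) (Fl : ℕ → Submodule K (Fin 2 → L)) :
    Set (Fin (2 * k - 1) → Submodule K (Fin 2 → L)) :=
  {G | ∃ A ∈ H, G = fun j => mapGLK K A (Fl (j.val + 1))}

open Polynomial

section AuxGL

variable {K L : Type*} [Field K] [Field L] [Algebra K L]

noncomputable def glLinK (K : Type*) {L : Type*} [Field K] [Field L] [Algebra K L]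
    (A : GL (Fin 2) L) : (Fin 2 → L) →ₗ[K] (Fin 2 → L) :=
  LinearMap.restrictScalars K (Matrix.toLin' (A : Matrix (Fin 2) (Fin 2) L))

lemma glLinK_comp (A B : GL (Fin 2) L) :
    (glLinK K A).comp (glLinK K B) = glLinK K (A * B) := by
  ext v
  simp [glLinK, Units.val_mul, Matrix.toLin'_mul]

lemma glLinK_one : glLinK K (1 : GL (Fin 2) L) = LinearMap.id := by
  ext v
  simp [glLinK, Units.val_one, Matrix.toLin'_one]

noncomputable def glEquivK (K : Type*) {L : Type*} [Field K] [Field L] [Algebra K L]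
    (A : GL (Fin 2) L) : (Fin 2 → L) ≃ₗ[K] (Fin 2 → L) :=
  LinearEquiv.ofLinear (glLinK K A) (glLinK K A⁻¹)
    (by rw [glLinK_comp, mul_inv_cancel, glLinK_one])
    (by rw [glLinK_comp, inv_mul_cancel, glLinK_one])

lemma mapGLK_eq (A : GL (Fin 2) L) (U : Submodule K (Fin 2 → L)) :
    mapGLK K A U = U.map (glEquivK K A : (Fin 2 → L) →ₗ[K] (Fin 2 → L)) := rfl

lemma mapGLK_finrank (A : GL (Fin 2) L) (U : Submodule K (Fin 2 → L)) :
    finrank K (mapGLK K A U) = finrank K U := by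
  rw [mapGLK_eq]
  exact LinearEquiv.finrank_map_eq (glEquivK K A) U

lemma mapGLK_inf (A : GL (Fin 2) L) (U W : Submodule K (Fin 2 → L)) :
    mapGLK K A (U ⊓ W) = mapGLK K A U ⊓ mapGLK K A W := by
  simp only [mapGLK_eq]
  exact Submodule.map_inf _ (glEquivK K A).injective

lemma mapGLK_sup (A : GL (Fin 2) L) (U W : Submodule K (Fin 2 → L)) :
    mapGLK K A (U ⊔ W) = mapGLK K A U ⊔ mapGLK K A W := by
  simp only [mapGLK_eq]
  exact Submodule.map_sup _ _ _

lemma mapGLK_mul (A B : GL (Fin 2) L) (U : Submodule K (Fin 2 → L)) :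
    mapGLK K (A * B) U = mapGLK K A (mapGLK K B U) := by
  simp only [mapGLK]
  rw [← Submodule.map_comp]
  congr 1
  ext v
  simp [Units.val_mul, Matrix.toLin'_mul]

lemma mapGLK_one (U : Submodule K (Fin 2 → L)) : mapGLK K (1 : GL (Fin 2) L) U = U := by
  simp only [mapGLK]
  convert Submodule.map_id U
  ext v
  simp [Units.val_one, Matrix.toLin'_one]

lemma mapGLK_mono (A : GL (Fin 2) L) {U W : Submodule K (Fin 2 → L)} (h : U ≤ W) :
    mapGLK K A U ≤ mapGLK K A W := Submodule.map_mono h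

lemma subspaceDist_mapGLK (A : GL (Fin 2) L) (U W : Submodule K (Fin 2 → L)) :
    subspaceDist (mapGLK K A U) (mapGLK K A W) = subspaceDist U W := by
  unfold subspaceDist
  rw [mapGLK_finrank, mapGLK_finrank, ← mapGLK_inf, mapGLK_finrank]

lemma mapGLK_restrictScalars (A : GL (Fin 2) L) (l : Submodule L (Fin 2 → L)) :
    mapGLK K A (l.restrictScalars K)
      = (l.map (Matrix.toLin' (A : Matrix (Fin 2) (Fin 2) L))).restrictScalars K := by
  ext v
  simp [mapGLK, Submodule.mem_map]

end AuxGL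

section AuxField

variable {L : Type*} [Field L]

lemma aeval_matrix_unit_or_zero (N : Matrix (Fin 2) (Fin 2) L)
    (hirr : Irreducible N.charpoly) (p : Polynomial L) :
    IsUnit (Polynomial.aeval N p) ∨ Polynomial.aeval N p = 0 := by
  have haev0 : ∀ r ∈ Ideal.span ({N.charpoly} : Set (Polynomial L)),
      Polynomial.aeval N r = 0 := by
    intro r hr
    obtain ⟨t, rfl⟩ := Ideal.mem_span_singleton'.mp hr
    simp [Matrix.aeval_self_charpoly]
  by_cases hp : p ∈ Ideal.span ({N.charpoly} : Set (Polynomial L))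
  · exact Or.inr (haev0 p hp)
  · left
    have hmax := PrincipalIdealRing.isMaximal_of_irreducible hirr
    obtain ⟨y, i, hi, hyi⟩ := hmax.exists_inv hp
    refine isUnit_iff_exists.mpr ⟨Polynomial.aeval N y, ?_, ?_⟩
    · have := congrArg (Polynomial.aeval N) hyi
      simp only [map_add, map_mul, map_one, haev0 i hi, add_zero] at this
      rw [← map_mul, mul_comm, map_mul] at this
      exact this
    · have := congrArg (Polynomial.aeval N) hyi
      simp only [map_add, map_mul, map_one, haev0 i hi, add_zero] at this
      exact this

lemma pow_eq_smul_one_of_eigen (M : GL (Fin 2) L)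
    (hirr : Irreducible (Matrix.charpoly (M : Matrix (Fin 2) (Fin 2) L)))
    (s : ℕ) (c : L) (v : Fin 2 → L) (hv : v ≠ 0)
    (h : ((M : Matrix (Fin 2) (Fin 2) L) ^ s).mulVec v = c • v) :
    (M : Matrix (Fin 2) (Fin 2) L) ^ s = c • 1 := by
  set N := (M : Matrix (Fin 2) (Fin 2) L) with hN
  have hP : (Polynomial.aeval N) (X ^ s - C c) = N ^ s - c • 1 := by
    simp [Algebra.algebraMap_eq_smul_one]
  rcases aeval_matrix_unit_or_zero N hirr (X ^ s - C c) with hu | h0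
  · exfalso
    rw [hP] at hu
    obtain ⟨u, hu⟩ := hu
    have hker : (N ^ s - c • 1).mulVec v = 0 := by
      rw [Matrix.sub_mulVec, Matrix.smul_mulVec, Matrix.one_mulVec, h, sub_self]
    apply hv
    have h1 : ((u⁻¹ : (Matrix (Fin 2) (Fin 2) L)ˣ) : Matrix (Fin 2) (Fin 2) L).mulVec
        ((N ^ s - c • 1).mulVec v) = 0 := by rw [hker, Matrix.mulVec_zero]
    rwa [Matrix.mulVec_mulVec, ← hu, Units.inv_mul, Matrix.one_mulVec] at h1
  · rw [hP] at h0
    exact sub_eq_zero.mp h0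

end AuxField

lemma flag_sum (k : ℕ) (hk : 1 ≤ k) :
    ∑ j : Fin (2 * k - 1),
        (if (j : ℕ) + 1 ≤ k then 2 * ((j : ℕ) + 1) else 4 * k - 2 * ((j : ℕ) + 1))
      = 2 * k ^ 2 := by
  obtain ⟨m, rfl⟩ : ∃ m, k = m + 1 := ⟨k - 1, by omega⟩
  rw [Fin.sum_univ_eq_sum_range
    (fun i => if i + 1 ≤ m + 1 then 2 * (i + 1) else 4 * (m + 1) - 2 * (i + 1))]
  have hsplit : 2 * (m + 1) - 1 = (m + 1) + m := by omega
  rw [hsplit, Finset.sum_range_add]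
  have hA : ∑ i ∈ Finset.range (m + 1),
      (if i + 1 ≤ m + 1 then 2 * (i + 1) else 4 * (m + 1) - 2 * (i + 1))
      = ∑ i ∈ Finset.range (m + 1), 2 * (i + 1) := by
    refine Finset.sum_congr rfl fun i hi => ?_
    rw [if_pos (by simp at hi; omega)]
  have hB : ∑ i ∈ Finset.range m,
      (if (m + 1) + i + 1 ≤ m + 1 then 2 * ((m + 1) + i + 1)
        else 4 * (m + 1) - 2 * ((m + 1) + i + 1))
      = ∑ i ∈ Finset.range m, 2 * (m - i) := by
    refine Finset.sum_congr rfl fun i hi => ?_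
    rw [if_neg (by omega)]
    simp at hi
    omega
  rw [hA, hB]
  have hrefl : ∑ i ∈ Finset.range m, 2 * (m - i) = ∑ i ∈ Finset.range m, 2 * (i + 1) := by
    rw [← Finset.sum_range_reflect (fun j => 2 * (j + 1)) m]
    refine Finset.sum_congr rfl fun i hi => ?_
    simp at hi
    congr 1
    omega
  rw [hrefl]
  have hshift : ∀ n : ℕ, ∑ i ∈ Finset.range n, 2 * (i + 1)
      = ∑ i ∈ Finset.range (n + 1), 2 * i := by
    intro n
    rw [Finset.sum_range_succ' (fun i => 2 * i) n]
    simp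
  have hgauss : ∀ n : ℕ, ∑ i ∈ Finset.range (n + 1), 2 * i = (n + 1) * n := by
    intro n
    rw [← Finset.mul_sum, mul_comm]
    have := Finset.sum_range_id_mul_two (n + 1)
    simpa using this
  rw [hshift, hshift, hgauss, hgauss]
  ring
lemma singer_arith (q : ℕ) (hq2 : 2 ≤ q) :
    (q ^ 2 - 1) / Nat.gcd (q ^ 2 - 1) (q - 1) = q + 1 := by
  obtain ⟨c, rfl⟩ : ∃ c, q = c + 2 := ⟨q - 2, by omega⟩
  have h1 : (c + 2) ^ 2 - 1 = (c + 1) * (c + 3) := by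
    have h0 : (c + 2) ^ 2 = c ^ 2 + 4 * c + 4 := by ring
    have h2 : (c + 1) * (c + 3) = c ^ 2 + 4 * c + 3 := by ring
    omega
  have h3 : c + 2 - 1 = c + 1 := by omega
  rw [h1, h3, Nat.gcd_eq_right ⟨c + 3, by ring⟩, Nat.mul_div_cancel_left _ (by omega)]

lemma restrictScalars_inf' {K L V : Type*} [Field K] [Field L] [Algebra K L]
    [AddCommGroup V] [Module K V] [Module L V] [IsScalarTower K L V]
    (p q : Submodule L V) :
    (p ⊓ q).restrictScalars K = p.restrictScalars K ⊓ q.restrictScalars K := by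
  ext v; simp

/-- Let `K` be a finite field of characteristic `2`, `L/K` an extension of
degree `k ≥ 1`, `S` the planar spread of the `K`-space `L²`, `M ∈ GL(2, L)` a Singer cycle
and `H̄ = ⟨M^{|L|−1}⟩`. For any full flag `F = (F_1, …, F_{2k−1})` of `K`-subspaces of `L²`
with `F_k ∈ S`, the orbit flag code `Orb_{H̄}(F)` has cardinality `|L| + 1` (the largest
possible size) and any two distinct flags in it are at flag distance exactly `2k²`. -/
theorem singer_orbit_flag_code_char_two
    {K L : Type*} [Field K] [Fintype K] [Field L] [Fintype L] [Algebra K L]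
    (hchar : ringChar K = 2)
    (k : ℕ) (hk : 1 ≤ k) (hdeg : finrank K L = k)
    (M : GL (Fin 2) L)
    (hirr : Irreducible (Matrix.charpoly (M : Matrix (Fin 2) (Fin 2) L)))
    (hord : orderOf M = Fintype.card L ^ 2 - 1)
    (Fl : ℕ → Submodule K (Fin 2 → L))
    (hdim : ∀ i, 1 ≤ i → i ≤ 2 * k - 1 → finrank K (Fl i) = i)
    (hmono : ∀ i j, 1 ≤ i → i < j → j ≤ 2 * k - 1 → Fl i < Fl j)
    (hFk : Fl k ∈ fieldReductionSpread K L) :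
    (orbFlagKL (Subgroup.zpowers (M ^ (Fintype.card L - 1))) k Fl).ncard
        = Fintype.card L + 1
    ∧ ∀ G ∈ orbFlagKL (Subgroup.zpowers (M ^ (Fintype.card L - 1))) k Fl,
      ∀ G' ∈ orbFlagKL (Subgroup.zpowers (M ^ (Fintype.card L - 1))) k Fl,
        G ≠ G' → ∑ j : Fin (2 * k - 1), subspaceDist (G j) (G' j) = 2 * k ^ 2 := by
  classical
  obtain ⟨l, hl1, hlk⟩ := hFk
  set q := Fintype.card L with hq
  set x := M ^ (q - 1) with hxdef
  have hq2 : 2 ≤ q := Fintype.one_lt_card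
  haveI hK2 : CharP K 2 := by rw [← hchar]; exact ringChar.charP K
  haveI hL2 : CharP L 2 := charP_of_injective_ringHom (algebraMap K L).injective 2
  have h2q : 2 ∣ q := by
    obtain ⟨n, hp, hcard⟩ := FiniteField.card L 2
    rw [hq, hcard]
    exact dvd_pow_self 2 n.2.ne'
  haveI : FiniteDimensional K (Fin 2 → L) := Module.Finite.of_finite
  have hfull : finrank K (Fin 2 → L) = 2 * k := by
    have h := finrank_mul_finrank K L (Fin 2 → L)
    rw [hdeg, finrank_fin_fun] at h
    omega
  have hordx : orderOf x = q + 1 := by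
    rw [hxdef, orderOf_pow, hord]
    exact singer_arith q hq2
  -- key lemma: elements of the orbit group fixing the line are trivial
  have key : ∀ B ∈ Subgroup.zpowers x,
      Submodule.map (Matrix.toLin' (B : Matrix (Fin 2) (Fin 2) L)) l = l → B = 1 := by
    intro B hB hBl
    obtain ⟨n, hn⟩ := Subgroup.mem_zpowers_iff.mp hB
    have hne0 : ((q + 1 : ℕ) : ℤ) ≠ 0 := by exact_mod_cast (by omega : q + 1 ≠ 0)
    have hmpos : (0 : ℤ) ≤ n % ((q + 1 : ℕ) : ℤ) := Int.emod_nonneg n hne0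
    obtain ⟨m, hm⟩ : ∃ m : ℕ, B = x ^ m := by
      refine ⟨(n % ((q + 1 : ℕ) : ℤ)).toNat, ?_⟩
      have hz : x ^ (n % ((q + 1 : ℕ) : ℤ)) = x ^ n := by
        rw [← hordx]; exact zpow_mod_orderOf x n
      rw [← hn, ← hz, ← zpow_natCast, Int.toNat_of_nonneg hmpos]
    obtain ⟨v, hv0, hlv⟩ : ∃ v : Fin 2 → L, v ≠ 0 ∧ l = Submodule.span L {v} := by
      have hbot : l ≠ ⊥ := by
        intro h; rw [h] at hl1; simp at hl1
      obtain ⟨v, hvl, hv0⟩ := Submodule.exists_mem_ne_zero_of_ne_bot hbot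
      refine ⟨v, hv0, ?_⟩
      refine (Submodule.eq_of_le_of_finrank_eq ?_ ?_).symm
      · rwa [Submodule.span_singleton_le_iff_mem]
      · rw [finrank_span_singleton hv0, hl1]
    obtain ⟨c, hc⟩ : ∃ c : L, Matrix.toLin' (B : Matrix (Fin 2) (Fin 2) L) v = c • v := by
      have hvmem : v ∈ l := by rw [hlv]; exact Submodule.mem_span_singleton_self v
      have hmem : Matrix.toLin' (B : Matrix (Fin 2) (Fin 2) L) v ∈ l := by
        rw [← hBl]; exact Submodule.mem_map_of_mem hvmem
      rw [hlv, Submodule.mem_span_singleton] at hmem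
      obtain ⟨c, hc⟩ := hmem
      exact ⟨c, hc.symm⟩
    have hBM : B = M ^ ((q - 1) * m) := by rw [hm, hxdef, ← pow_mul]
    have hmv : ((M : Matrix (Fin 2) (Fin 2) L) ^ ((q - 1) * m)).mulVec v = c • v := by
      rw [← Units.val_pow_eq_pow_val, ← hBM, ← Matrix.toLin'_apply]
      exact hc
    have hsc : (M : Matrix (Fin 2) (Fin 2) L) ^ ((q - 1) * m) = c • 1 :=
      pow_eq_smul_one_of_eigen M hirr _ c v hv0 hmv
    have hc0 : c ≠ 0 := by
      intro h0
      rw [h0, zero_smul] at hsc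
      have hu : IsUnit ((M : Matrix (Fin 2) (Fin 2) L) ^ ((q - 1) * m)) := by
        rw [← Units.val_pow_eq_pow_val]; exact (M ^ ((q - 1) * m)).isUnit
      rw [hsc] at hu
      exact not_isUnit_zero hu
    have hBpow : B ^ (q - 1) = 1 := by
      apply Units.ext
      rw [Units.val_pow_eq_pow_val, hBM, Units.val_pow_eq_pow_val, hsc, _root_.smul_pow,
        one_pow, Units.val_one]
      rw [show c ^ (q - 1) = 1 from FiniteField.pow_card_sub_one_eq_one c hc0, one_smul]
    have hd1 : orderOf B ∣ q - 1 := orderOf_dvd_of_pow_eq_one hBpow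
    have hd2 : orderOf B ∣ q + 1 := by rw [hm, ← hordx]; exact orderOf_pow_dvd m
    have hd3 : orderOf B ∣ 2 := by
      have h := Nat.dvd_sub hd2 hd1
      rwa [show q + 1 - (q - 1) = 2 by omega] at h
    have hone : orderOf B = 1 := by
      rcases (Nat.dvd_prime Nat.prime_two).mp hd3 with h | h
      · exact h
      · exfalso
        rw [h] at hd1
        obtain ⟨u, hu⟩ := hd1
        omega
    exact orderOf_eq_one_iff.mp hone
  -- image of a line under B is a line
  have hline_map : ∀ B : GL (Fin 2) L,
      finrank L (Submodule.map (Matrix.toLin' (B : Matrix (Fin 2) (Fin 2) L)) l) = 1 := by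
    intro B
    have hBB : ((B : Matrix (Fin 2) (Fin 2) L) * ((B⁻¹ : GL (Fin 2) L) : Matrix (Fin 2) (Fin 2) L)) = 1 := by
      rw [← Units.val_mul, mul_inv_cancel, Units.val_one]
    have hBB' : (((B⁻¹ : GL (Fin 2) L) : Matrix (Fin 2) (Fin 2) L) * (B : Matrix (Fin 2) (Fin 2) L)) = 1 := by
      rw [← Units.val_mul, inv_mul_cancel, Units.val_one]
    let e : (Fin 2 → L) ≃ₗ[L] (Fin 2 → L) :=
      LinearEquiv.ofLinear (Matrix.toLin' (B : Matrix (Fin 2) (Fin 2) L))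
        (Matrix.toLin' ((B⁻¹ : GL (Fin 2) L) : Matrix (Fin 2) (Fin 2) L))
        (by rw [← Matrix.toLin'_mul, hBB, Matrix.toLin'_one])
        (by rw [← Matrix.toLin'_mul, hBB', Matrix.toLin'_one])
    exact (LinearEquiv.finrank_map_eq e l).trans hl1
  -- distinct lines intersect trivially
  have hlines : ∀ l' : Submodule L (Fin 2 → L), finrank L l' = 1 → l' ≠ l →
      l' ⊓ l = ⊥ := by
    intro l' h1' hne
    by_contra hbot
    have hpos : 1 ≤ finrank L ↥(l' ⊓ l) := by
      rcases Nat.eq_zero_or_pos (finrank L ↥(l' ⊓ l)) with h | h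
      · exact absurd (Submodule.finrank_eq_zero.mp h) hbot
      · exact h
    have hle1 : finrank L ↥(l' ⊓ l) ≤ 1 := by
      have := Submodule.finrank_mono (inf_le_left : l' ⊓ l ≤ l')
      omega
    have heq' : l' ⊓ l = l' := Submodule.eq_of_le_of_finrank_eq inf_le_left (by omega)
    have heq : l' ⊓ l = l := Submodule.eq_of_le_of_finrank_eq inf_le_right (by omega)
    exact hne (heq' ▸ heq)
  -- F_k meets its image trivially
  have hBk : ∀ B ∈ Subgroup.zpowers x, B ≠ 1 → Fl k ⊓ mapGLK K B (Fl k) = ⊥ := by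
    intro B hB hB1
    rw [hlk, mapGLK_restrictScalars, ← restrictScalars_inf']
    have hne : Submodule.map (Matrix.toLin' (B : Matrix (Fin 2) (Fin 2) L)) l ≠ l :=
      fun h => hB1 (key B hB h)
    rw [inf_comm, hlines _ (hline_map B) hne, Submodule.restrictScalars_bot]
  have hfk : finrank K (Fl k) = k := hdim k hk (by omega)
  have hBtop : ∀ B ∈ Subgroup.zpowers x, B ≠ 1 → Fl k ⊔ mapGLK K B (Fl k) = ⊤ := by
    intro B hB hB1
    apply Submodule.eq_top_of_finrank_eq
    have h := Submodule.finrank_sup_add_finrank_inf_eq (Fl k) (mapGLK K B (Fl k))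
    rw [hBk B hB hB1, hfk, mapGLK_finrank, hfk, finrank_bot] at h
    rw [hfull]
    omega
  -- per-index distances
  have hdist : ∀ B ∈ Subgroup.zpowers x, B ≠ 1 → ∀ i, 1 ≤ i → i ≤ 2 * k - 1 →
      subspaceDist (Fl i) (mapGLK K B (Fl i))
        = if i ≤ k then 2 * i else 4 * k - 2 * i := by
    intro B hB hB1 i h1 h2
    have hi : finrank K (Fl i) = i := hdim i h1 h2
    by_cases hik : i ≤ k
    · rw [if_pos hik]
      have hle : Fl i ≤ Fl k := by
        rcases eq_or_lt_of_le hik with h | h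
        · rw [h]
        · exact (hmono i k h1 h (by omega)).le
      have hinf : Fl i ⊓ mapGLK K B (Fl i) = ⊥ := by
        have hsub : Fl i ⊓ mapGLK K B (Fl i) ≤ Fl k ⊓ mapGLK K B (Fl k) :=
          inf_le_inf hle (mapGLK_mono B hle)
        rw [hBk B hB hB1] at hsub
        exact le_bot_iff.mp hsub
      unfold subspaceDist
      rw [hinf, hi, mapGLK_finrank, hi, finrank_bot]
      omega
    · rw [if_neg hik]
      have hle : Fl k ≤ Fl i := (hmono k i hk (by omega) h2).le
      have hsup : Fl i ⊔ mapGLK K B (Fl i) = ⊤ := by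
        have hsub : Fl k ⊔ mapGLK K B (Fl k) ≤ Fl i ⊔ mapGLK K B (Fl i) :=
          sup_le_sup hle (mapGLK_mono B hle)
        rw [hBtop B hB hB1] at hsub
        exact top_le_iff.mp hsub
      have h := Submodule.finrank_sup_add_finrank_inf_eq (Fl i) (mapGLK K B (Fl i))
      rw [hsup, hi, mapGLK_finrank, hi, finrank_top, hfull] at h
      unfold subspaceDist
      rw [hi, mapGLK_finrank, hi]
      omega
  constructor
  · -- cardinality
    have himg : orbFlagKL (Subgroup.zpowers x) k Fl =
        (fun A : GL (Fin 2) L => fun j : Fin (2 * k - 1) => mapGLK K A (Fl (j.val + 1)))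
          '' (Subgroup.zpowers x : Set (GL (Fin 2) L)) := by
      ext G
      simp only [orbFlagKL, Set.mem_image, Set.mem_setOf_eq, SetLike.mem_coe]
      constructor
      · rintro ⟨A, hA, rfl⟩; exact ⟨A, hA, rfl⟩
      · rintro ⟨A, hA, rfl⟩; exact ⟨A, hA, rfl⟩
    rw [himg]
    have hinj : Set.InjOn
        (fun A : GL (Fin 2) L => fun j : Fin (2 * k - 1) => mapGLK K A (Fl (j.val + 1)))
        (Subgroup.zpowers x : Set (GL (Fin 2) L)) := by
      intro A hA A' hA' hAA'
      have hcomp := congrFun hAA' ⟨k - 1, by omega⟩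
      simp only at hcomp
      rw [show k - 1 + 1 = k by omega] at hcomp
      have h2 : mapGLK K (A'⁻¹ * A) (Fl k) = Fl k := by
        rw [mapGLK_mul, hcomp, ← mapGLK_mul, inv_mul_cancel, mapGLK_one]
      have hmem : A'⁻¹ * A ∈ Subgroup.zpowers x := mul_mem (inv_mem hA') hA
      have hfix : Submodule.map
          (Matrix.toLin' ((A'⁻¹ * A : GL (Fin 2) L) : Matrix (Fin 2) (Fin 2) L)) l = l := by
        rw [hlk, mapGLK_restrictScalars] at h2
        exact Submodule.restrictScalars_injective K L _ h2
      exact (inv_mul_eq_one.mp (key _ hmem hfix)).symm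
    rw [Set.ncard_image_of_injOn hinj, ← Nat.card_coe_set_eq]
    exact (Nat.card_zpowers x).trans hordx
  · -- distances
    rintro G ⟨A, hA, rfl⟩ G' ⟨A', hA', rfl⟩ hne
    set B := A⁻¹ * A' with hBdef
    have hBmem : B ∈ Subgroup.zpowers x := mul_mem (inv_mem hA) hA'
    have hB1 : B ≠ 1 := by
      intro h
      exact hne (by rw [inv_mul_eq_one.mp h])
    have hA'eq : A' = A * B := by rw [hBdef, ← mul_assoc, mul_inv_cancel, one_mul]
    calc ∑ j : Fin (2 * k - 1),
          subspaceDist (mapGLK K A (Fl (j.val + 1))) (mapGLK K A' (Fl (j.val + 1)))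
        = ∑ j : Fin (2 * k - 1),
            subspaceDist (Fl (j.val + 1)) (mapGLK K B (Fl (j.val + 1))) := by
          refine Finset.sum_congr rfl fun j _ => ?_
          rw [hA'eq, mapGLK_mul, subspaceDist_mapGLK]
      _ = ∑ j : Fin (2 * k - 1),
            (if (j : ℕ) + 1 ≤ k then 2 * ((j : ℕ) + 1) else 4 * k - 2 * ((j : ℕ) + 1)) := by
          refine Finset.sum_congr rfl fun j _ => ?_
          exact hdist B hBmem hB1 (j.val + 1) (by omega) (by have := j.isLt; omega)
      _ = 2 * k ^ 2 := flag_sum k hk
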